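/- Assume n ≥ 1 and let D : A → A be a k-linear map satisfying the graded Leibniz rule with D(x_i) = x_1 * x_i for all i ∈ Fin n. Then for every m ≥ 1, the image under D of the set of polynomials homogeneous of degree 2m−1 equals the set { x_1 * g | g ∈ A homogeneous of degree 2m−1 }. -/

import Mathlib

/-!
Writing a monomial as `x_i` times a monomial of one degree less, the graded Leibniz rule gives
`D (x_i p) = x_1 x_i p - x_i D p`. Hence, by induction on the degree, `D` multiplies
homogeneous polynomials of odd degree by `x_1` and kills those of even degree (the sign flips
cancel the new term every second step). On odd degree `D` is therefore multiplication by `x_1`.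
-/

open MvPolynomial

namespace MvPolynomial

variable {σ R : Type*} [CommRing R]

def IsGradedLeibniz (D : MvPolynomial σ R →ₗ[R] MvPolynomial σ R) : Prop :=
  ∀ (d : ℕ) (a b : MvPolynomial σ R), a.IsHomogeneous d →
    D (a * b) = D a * b + ((-1 : R) ^ d) • (a * D b)

namespace IsGradedLeibniz

variable {D : MvPolynomial σ R →ₗ[R] MvPolynomial σ R} (hD : IsGradedLeibniz D)
include hD

theorem map_one : D 1 = 0 := by
  simpa using hD 0 1 1 (isHomogeneous_one σ R)

theorem map_C (c : R) : D (C c) = 0 := by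
  rw [C_eq_smul_one, map_smul, hD.map_one, smul_zero]

theorem map_X_mul (i : σ) (p : MvPolynomial σ R) : D (X i * p) = D (X i) * p - X i * D p := by
  rw [hD 1 (X i) p (isHomogeneous_X R i), pow_one, neg_one_smul, sub_eq_add_neg]

variable {y : MvPolynomial σ R} (hX : ∀ i, D (X i) = y * X i)
include hX

theorem map_X_pow_mul {d : ℕ} {p : MvPolynomial σ R} (hp : D p = if Odd d then y * p else 0)
    (i : σ) (b : ℕ) :
    D (X i ^ b * p) = if Odd (b + d) then y * (X i ^ b * p) else 0 := by
  induction b with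
  | zero => simpa using hp
  | succ b ih =>
    rw [pow_succ', mul_assoc, hD.map_X_mul, hX, ih, add_right_comm]
    by_cases h : Odd (b + d)
    · rw [if_pos h, if_neg (Nat.odd_add_one.not.mpr (not_not.mpr h))]
      ring
    · rw [if_neg h, if_pos (Nat.odd_add_one.mpr h)]
      ring

theorem map_monomial (s : σ →₀ ℕ) (c : R) :
    D (monomial s c) = if Odd s.degree then y * monomial s c else 0 := by
  induction s using Finsupp.induction with
  | zero => simp [hD.map_C]
  | single_add i b s _ _ ih =>
    rw [monomial_single_add, hD.map_X_pow_mul hX ih, map_add, Finsupp.degree_single]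

theorem map_eq_mul_of_isHomogeneous {d : ℕ} (hd : Odd d) {f : MvPolynomial σ R}
    (hf : f.IsHomogeneous d) : D f = y * f := by
  conv_lhs => rw [f.as_sum]
  conv_rhs => rw [f.as_sum]
  rw [map_sum, Finset.mul_sum]
  refine Finset.sum_congr rfl fun s hs => ?_
  have hsd : s.degree = d := by
    by_contra h
    exact mem_support_iff.mp hs (hf.coeff_eq_zero h)
  rw [hD.map_monomial hX, if_pos (hsd ▸ hd)]

end IsGradedLeibniz

end MvPolynomial

theorem stmt_7_general (k : Type*) [Field k] (n : ℕ) (hn : 1 ≤ n)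
    (D : MvPolynomial (Fin n) k →ₗ[k] MvPolynomial (Fin n) k)
    (hLeib : ∀ (d : ℕ) (a b : MvPolynomial (Fin n) k), a.IsHomogeneous d →
      D (a * b) = D a * b + ((-1 : k) ^ d) • (a * D b))
    (hD : ∀ i : Fin n, D (X i) = X ⟨0, hn⟩ * X i) :
    ∀ m : ℕ, 1 ≤ m →
      D '' {f : MvPolynomial (Fin n) k | f.IsHomogeneous (2 * m - 1)} =
        {p : MvPolynomial (Fin n) k |
          ∃ g : MvPolynomial (Fin n) k, g.IsHomogeneous (2 * m - 1) ∧ p = X ⟨0, hn⟩ * g} := by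
  intro m hm
  have hodd : Odd (2 * m - 1) := ⟨m - 1, by omega⟩
  have hDf : Set.EqOn D (X ⟨0, hn⟩ * ·) {f | f.IsHomogeneous (2 * m - 1)} :=
    fun _ hf => IsGradedLeibniz.map_eq_mul_of_isHomogeneous hLeib hD hodd hf
  rw [Set.image_congr hDf]
  ext p
  simp only [Set.mem_image, Set.mem_ofPred_eq, eq_comm]

/-- For the DG polynomial algebra `A(1,0,…,0)` and every `m ≥ 1`, the image
under `D` of the homogeneous polynomials of degree `2m - 1` is exactly the set of
polynomials of the form `X 0 * g` with `g` homogeneous of degree `2m - 1`. -/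
theorem stmt_7 (k : Type*) [Field k] [CharZero k] (n : ℕ) (hn : 1 ≤ n)
    (D : MvPolynomial (Fin n) k →ₗ[k] MvPolynomial (Fin n) k)
    (hLeib : ∀ (d : ℕ) (a b : MvPolynomial (Fin n) k), a.IsHomogeneous d →
      D (a * b) = D a * b + ((-1 : k) ^ d) • (a * D b))
    (hD : ∀ i : Fin n, D (X i) = X ⟨0, hn⟩ * X i) :
    ∀ m : ℕ, 1 ≤ m →
      D '' {f : MvPolynomial (Fin n) k | f.IsHomogeneous (2 * m - 1)} =
        {p : MvPolynomial (Fin n) k |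
          ∃ g : MvPolynomial (Fin n) k, g.IsHomogeneous (2 * m - 1) ∧ p = X ⟨0, hn⟩ * g} :=
  stmt_7_general k n hn D hLeib hD
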